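/- Let P, Q be closed convex cones in ℝⁿ with |𝔰(P,Q)| ≠ 1, where 𝔰(P,Q) = min_{u∈P∩Sₙ} max_{v∈Q∩Sₙ}⟨u,v⟩, and let L be the smallest linear subspace containing P ∪ Q. If ū solves the minimization problem and the nearest-point projection Proj_{Q∩Sₙ}(ū) is a singleton, then ū lies on the boundary of P relative to L. -/

import Mathlib

open Real Set
open scoped ENNReal

noncomputable section

local notation "⟪" x ", " y "⟫" => @inner ℝ _ _ x y

/-- Euclidean space ℝⁿ. -/
abbrev E (n : ℕ) := EuclideanSpace ℝ (Fin n)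

/-- Unit sphere Sₙ in ℝⁿ. -/
def sph (n : ℕ) : Set (E n) := {u | ‖u‖ = 1}

/-- `P` is a closed convex cone in ℝⁿ. -/
def IsClosedConvexCone {n : ℕ} (P : Set (E n)) : Prop :=
  IsClosed P ∧ Convex ℝ P ∧ ∀ c : ℝ, 0 ≤ c → ∀ x ∈ P, c • x ∈ P

/-- Support function of Q ∩ Sₙ : F_Q(u) = max_{v ∈ Q∩Sₙ} ⟨u,v⟩. -/
def F {n : ℕ} (Q : Set (E n)) (u : E n) : ℝ :=
  sSup ((fun v => ⟪u, v⟫) '' (Q ∩ sph n))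

/-- 𝔰(P,Q) := min_{u∈P∩Sₙ} F_Q(u). -/
def sval {n : ℕ} (P Q : Set (E n)) : ℝ := sInf (F Q '' (P ∩ sph n))

/-- The set of nearest points to u in Q ∩ Sₙ. -/
def projSet {n : ℕ} (Q : Set (E n)) (u : E n) : Set (E n) :=
  {v ∈ Q ∩ sph n | ∀ w ∈ Q ∩ sph n, ‖v - u‖ ≤ ‖w - u‖}

/-! If `u` were interior to `P` relative to `L`, every direction `d ∈ L` with `⟪u, d⟫ = 0` would be
feasible, so `F_Q(x_t) ≥ F_Q(u)` for `x_t = (u + t d) / ‖u + t d‖ ∈ P ∩ Sₙ`, `t > 0` small. For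
maximisers `w_t ∈ Q ∩ Sₙ` of `⟪x_t, ·⟫` this gives `⟪d, w_t⟫ ≥ -t ‖d‖²`, and by compactness and
uniqueness of the maximiser `v` at `u`, `w_t → v`; hence `⟪d, v⟫ ≥ 0`. Applied to
`±(v - ⟪u, v⟫ u) ∈ L` this gives `1 - ⟪u, v⟫² = 0`, i.e. `|𝔰(P,Q)| = |F_Q(u)| = 1`. -/

open Filter Topology

theorem Filter.Tendsto.prodMk_mapClusterPt {ι X Y : Type*} [TopologicalSpace X]
    [TopologicalSpace Y] {l : Filter ι} {f : ι → X} {g : ι → Y} {x : X} {y : Y}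
    (hf : Tendsto f l (𝓝 x)) (hg : MapClusterPt y l g) :
    MapClusterPt (x, y) l fun i => (f i, g i) := by
  rw [((𝓝 x).basis_sets.prod_nhds (𝓝 y).basis_sets).mapClusterPt_iff_frequently]
  rintro ⟨s, t⟩ ⟨hs, ht⟩
  exact (hg.frequently ht).and_eventually (hf hs) |>.mono fun _ h => ⟨h.2, h.1⟩

section InnerProductSpace

variable {V : Type*} [NormedAddCommGroup V] [InnerProductSpace ℝ V]

theorem norm_sub_le_norm_sub_iff_inner_le {a b u : V} (hab : ‖a‖ = ‖b‖) :
    ‖a - u‖ ≤ ‖b - u‖ ↔ ⟪u, b⟫ ≤ ⟪u, a⟫ := by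
  rw [← sq_le_sq₀ (norm_nonneg _) (norm_nonneg _), norm_sub_sq_real, norm_sub_sq_real, hab,
    real_inner_comm a, real_inner_comm b]
  constructor <;> intro h <;> linarith

theorem tendsto_of_isMaxOn_inner_unique {ι : Type*} {K : Set V} (hK : IsCompact K) {u v : V}
    (hv : IsMaxOn (⟪u, ·⟫) K v) (huniq : ∀ w ∈ K, IsMaxOn (⟪u, ·⟫) K w → w = v)
    {l : Filter ι} {x w : ι → V} (hx : Tendsto x l (𝓝 u)) (hwK : ∀ᶠ i in l, w i ∈ K)
    (hw : ∀ᶠ i in l, ⟪u, v⟫ ≤ ⟪x i, w i⟫) : Tendsto w l (𝓝 v) := by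
  refine hK.tendsto_nhds_of_unique_mapClusterPt hwK fun y hyK hy => huniq y hyK fun z hz => ?_
  have hcluster : MapClusterPt ⟪u, y⟫ l fun i => ⟪x i, w i⟫ :=
    (hx.prodMk_mapClusterPt hy).continuousAt_comp (f := fun p : V × V => ⟪p.1, p.2⟫)
      (continuous_fst.inner continuous_snd).continuousAt
  exact (hv hz).trans (isClosed_Ici.mem_of_mapClusterPt hcluster hw)

theorem norm_add_smul_sq_of_inner_eq_zero {u d : V} (hud : ⟪u, d⟫ = 0) (t : ℝ) :
    ‖u + t • d‖ ^ 2 = ‖u‖ ^ 2 + t ^ 2 * ‖d‖ ^ 2 := by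
  rw [norm_add_sq_real, real_inner_smul_right, hud, norm_smul, Real.norm_eq_abs, mul_pow, sq_abs]
  ring

theorem neg_mul_norm_sq_le_inner_of_inner_le_inner_normalize {u d w : V} {t : ℝ}
    (hu : ‖u‖ = 1) (hud : ⟪u, d⟫ = 0) (ht : 0 < t) (hw : ‖w‖ ≤ 1)
    (h : ⟪u, w⟫ ≤ ⟪‖u + t • d‖⁻¹ • (u + t • d), w⟫) : -(t * ‖d‖ ^ 2) ≤ ⟪d, w⟫ := by
  set r := ‖u + t • d‖
  have hr_sq : r ^ 2 = 1 + t ^ 2 * ‖d‖ ^ 2 := by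
    rw [norm_add_smul_sq_of_inner_eq_zero hud, hu, one_pow]
  have hr : 1 ≤ r := by nlinarith [norm_nonneg (u + t • d)]
  have huw : -1 ≤ ⟪u, w⟫ := by
    nlinarith [neg_abs_le ⟪u, w⟫, abs_real_inner_le_norm u w, norm_nonneg w]
  -- clearing the factor `r⁻¹` gives `(r - 1) ⟪u, w⟫ ≤ t ⟪d, w⟫`, and `r - 1 ≤ r² - 1 = t² ‖d‖²`
  have key : r * ⟪u, w⟫ ≤ ⟪u, w⟫ + t * ⟪d, w⟫ := by
    rw [real_inner_smul_left, inner_add_left, real_inner_smul_left] at h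
    rwa [inv_mul_eq_div, le_div_iff₀ (by linarith), mul_comm] at h
  nlinarith

theorem abs_inner_eq_one_of_forall_inner_nonneg {L : Submodule ℝ V} {u v : V} (hu : u ∈ L)
    (hv : v ∈ L) (hu1 : ‖u‖ = 1) (hv1 : ‖v‖ = 1) (h : ∀ d ∈ L, ⟪u, d⟫ = 0 → 0 ≤ ⟪d, v⟫) :
    |⟪u, v⟫| = 1 := by
  set d := v - ⟪u, v⟫ • u
  have hdL : d ∈ L := L.sub_mem hv (L.smul_mem _ hu)
  have hud : ⟪u, d⟫ = 0 := by
    rw [inner_sub_right, real_inner_smul_right, real_inner_self_eq_norm_sq, hu1]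
    ring
  have hdv : ⟪d, v⟫ = 1 - ⟪u, v⟫ ^ 2 := by
    rw [inner_sub_left, real_inner_smul_left, real_inner_self_eq_norm_sq, hv1]
    ring
  have hpos := h d hdL hud
  have hneg := h (-d) (L.neg_mem hdL) (by rw [inner_neg_right, hud, neg_zero])
  rw [inner_neg_left, hdv] at hneg
  rw [hdv] at hpos
  nlinarith [sq_abs ⟪u, v⟫, abs_nonneg ⟪u, v⟫]

end InnerProductSpace

section Sphere

variable {n : ℕ}

theorem isCompact_inter_sph {Q : Set (E n)} (hQ : IsClosed Q) : IsCompact (Q ∩ sph n) := by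
  have : sph n = Metric.sphere 0 1 := by ext; simp [sph]
  exact this ▸ (isCompact_sphere 0 1).inter_left hQ

theorem mem_projSet_iff {Q : Set (E n)} {u v : E n} :
    v ∈ projSet Q u ↔ v ∈ Q ∩ sph n ∧ IsMaxOn (⟪u, ·⟫) (Q ∩ sph n) v := by
  refine and_congr_right fun hv => forall₂_congr fun w hw => ?_
  exact norm_sub_le_norm_sub_iff_inner_le (hv.2.trans hw.2.symm)

theorem F_eq_inner_of_isMaxOn {Q : Set (E n)} {u v : E n} (hv : v ∈ Q ∩ sph n)
    (hmax : IsMaxOn (⟪u, ·⟫) (Q ∩ sph n) v) : F Q u = ⟪u, v⟫ :=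
  IsGreatest.csSup_eq ⟨mem_image_of_mem _ hv, forall_mem_image.2 hmax⟩

theorem inner_nonneg_of_isMinOn_F {P Q : Set (E n)} (hP : ∀ c : ℝ, 0 ≤ c → ∀ x ∈ P, c • x ∈ P)
    (hQ : IsClosed Q) {u v d : E n} (hu : u ∈ P ∩ sph n) (hmin : IsMinOn (F Q) (P ∩ sph n) u)
    (hv : projSet Q u = {v}) (hud : ⟪u, d⟫ = 0) (hd : ∀ᶠ t : ℝ in 𝓝[>] 0, u + t • d ∈ P) :
    0 ≤ ⟪d, v⟫ := by
  have hu1 : ‖u‖ = 1 := hu.2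
  have hK := isCompact_inter_sph hQ
  obtain ⟨hvK, hvmax⟩ := mem_projSet_iff.1 (hv.symm ▸ mem_singleton v : v ∈ projSet Q u)
  set x : ℝ → E n := fun t => ‖u + t • d‖⁻¹ • (u + t • d)
  have hline : Tendsto (fun t : ℝ => u + t • d) (𝓝 0) (𝓝 u) :=
    Continuous.tendsto' (by fun_prop) 0 u (by simp)
  have hx : Tendsto x (𝓝[>] 0) (𝓝 u) := by
    have := (hline.norm.inv₀ (by rw [hu1]; exact one_ne_zero)).smul hline
    simpa [x, hu1] using this.mono_left nhdsWithin_le_nhds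
  have hxPS : ∀ᶠ t in 𝓝[>] 0, x t ∈ P ∩ sph n := hd.mono fun t ht => by
    have hne : u + t • d ≠ 0 := by
      rw [← norm_ne_zero_iff, ← pow_ne_zero_iff two_ne_zero,
        norm_add_smul_sq_of_inner_eq_zero hud, hu1]
      positivity
    exact ⟨hP _ (by positivity) _ ht, norm_smul_inv_norm hne⟩
  have hcont (t : ℝ) : Continuous (⟪x t, ·⟫) := continuous_const.inner continuous_id
  choose w hwK hwmax using fun t => hK.exists_isMaxOn ⟨v, hvK⟩ (hcont t).continuousOn
  have hw : ∀ᶠ t in 𝓝[>] 0, ⟪u, v⟫ ≤ ⟪x t, w t⟫ := hxPS.mono fun t ht => by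
    rw [← F_eq_inner_of_isMaxOn hvK hvmax, ← F_eq_inner_of_isMaxOn (hwK t) (hwmax t)]
    exact hmin ht
  have hwv : Tendsto w (𝓝[>] 0) (𝓝 v) :=
    tendsto_of_isMaxOn_inner_unique hK hvmax
      (fun w hw hmax => by rw [← mem_singleton_iff, ← hv]; exact mem_projSet_iff.2 ⟨hw, hmax⟩)
      hx (Eventually.of_forall hwK) hw
  have hbound : ∀ᶠ t in 𝓝[>] 0, -(t * ‖d‖ ^ 2) ≤ ⟪d, w t⟫ := by
    filter_upwards [hw, self_mem_nhdsWithin] with t ht ht0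
    exact neg_mul_norm_sq_le_inner_of_inner_le_inner_normalize hu1 hud ht0 (hwK t).2.le
      ((hvmax (hwK t)).trans ht)
  have hlim : Tendsto (fun t : ℝ => -(t * ‖d‖ ^ 2)) (𝓝[>] 0) (𝓝 0) :=
    (Continuous.tendsto' (by fun_prop) 0 0 (by simp)).mono_left nhdsWithin_le_nhds
  exact le_of_tendsto_of_tendsto hlim (tendsto_const_nhds.inner hwv) hbound

end Sphere

theorem solution_on_relative_boundary_general {n : ℕ} (P Q : Set (E n))
    (hP : IsClosedConvexCone P) (hQ : IsClosedConvexCone Q)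
    (hs : |sval P Q| ≠ 1)
    (u : E n) (hu : u ∈ P ∩ sph n)
    (hmin : IsLeast (F Q '' (P ∩ sph n)) (F Q u))
    (hproj : ∃ v, projSet Q u = {v}) :
    u ∈ closure P ∧
      u ∈ closure ((↑(Submodule.span ℝ (P ∪ Q)) : Set (E n)) \ P) := by
  obtain ⟨v, hv⟩ := hproj
  obtain ⟨hvK, hvmax⟩ := mem_projSet_iff.1 (hv.symm ▸ mem_singleton v : v ∈ projSet Q u)
  refine ⟨subset_closure hu.1, by_contra fun hcl => hs ?_⟩
  set L := Submodule.span ℝ (P ∪ Q)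
  have hPL : P ⊆ L := subset_union_left.trans Submodule.subset_span
  have hQL : Q ⊆ L := subset_union_right.trans Submodule.subset_span
  have hinterior : ∀ᶠ x in 𝓝 u, x ∈ L → x ∈ P := by
    simpa [mem_closure_iff_frequently, not_frequently] using hcl
  rw [sval, hmin.csInf_eq, F_eq_inner_of_isMaxOn hvK hvmax]
  refine abs_inner_eq_one_of_forall_inner_nonneg (hPL hu.1) (hQL hvK.1) hu.2 hvK.2
    fun d hdL hud => ?_
  have hline : Tendsto (fun t : ℝ => u + t • d) (𝓝[>] 0) (𝓝 u) :=
    (Continuous.tendsto' (by fun_prop) 0 u (by simp)).mono_left nhdsWithin_le_nhds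
  refine inner_nonneg_of_isMinOn_F hP.2.2 hQ.1 hu (fun x hx => hmin.2 (mem_image_of_mem _ hx)) hv
    hud ((hline.eventually hinterior).mono fun t ht => ht ?_)
  exact L.add_mem (hPL hu.1) (L.smul_mem _ hdL)

/-- if |𝔰(P,Q)| ≠ 1, ū solves the minimization problem and
Proj_{Q∩Sₙ}(ū) is a singleton, then ū lies on the boundary of P relative to the smallest
linear subspace L containing P and Q (that is, ū is in the closure of P and in the closure
of L \ P). -/
theorem solution_on_relative_boundary {n : ℕ} (P Q : Set (E n))
    (hP : IsClosedConvexCone P) (hQ : IsClosedConvexCone Q)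
    (hPne : (P ∩ sph n).Nonempty) (hQne : (Q ∩ sph n).Nonempty)
    (hs : |sval P Q| ≠ 1)
    (u : E n) (hu : u ∈ P ∩ sph n)
    (hmin : IsLeast (F Q '' (P ∩ sph n)) (F Q u))
    (hproj : ∃ v, projSet Q u = {v}) :
    u ∈ closure P ∧
      u ∈ closure ((↑(Submodule.span ℝ (P ∪ Q)) : Set (E n)) \ P) :=
  solution_on_relative_boundary_general P Q hP hQ hs u hu hmin hproj
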